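/- arXiv:2509.03953 — 2 statements merged into one kernel-verified Lean document; each statement's English description precedes it below -/
import Mathlib

section
/- Suppose in the priority-queue selection process each stored node s has a value f(n_s, s) where n_s counts its re-expansions, each f(·, s) is strictly increasing and unbounded in its first argument, and at each step the node with minimal current value is selected and its counter incremented. Then every node inserted into the queue is eventually selected: for every node s and every step count, there is a later step at which s has minimal value. -/
open Filter

/-- In the priority-queue selection process over a finite set of nodes,
where each node `s` has a strictly increasing unbounded value function
`f s : ℕ → ℝ` of its re-expansion counter, and at each step a node of
minimal current value is selected and its counter incremented, every node
is selected infinitely often (in particular at least once). -/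
theorem stmt_6 {Q : Type*} [Fintype Q] [Nonempty Q] [DecidableEq Q]
    (f : Q → ℕ → ℝ)
    (hmono : ∀ s, StrictMono (f s))
    (hub : ∀ s, Tendsto (f s) atTop atTop)
    (c : ℕ → Q → ℕ) (sel : ℕ → Q)
    (hc0 : ∀ s, c 0 s = 0)
    (hmin : ∀ k t, f (sel k) (c k (sel k)) ≤ f t (c k t))
    (hstep : ∀ k s, c (k + 1) s = if s = sel k then c k s + 1 else c k s) :
    ∀ s : Q, ∀ N : ℕ, ∃ k ≥ N, sel k = s := by
  -- the counter equals the number of prior selections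
  have hcount : ∀ t k, c k t = Nat.count (fun j => sel j = t) k := by
    intro t k
    induction k with
    | zero => simp [hc0]
    | succ k ih =>
      rw [hstep, ih, Nat.count_succ]
      by_cases h : sel k = t
      · rw [if_pos h.symm, if_pos h]
      · rw [if_neg (fun he => h he.symm), if_neg h, add_zero]
  intro s N
  by_contra h
  push_neg at h
  -- c k s is constant for k ≥ N
  have hconst : ∀ k, N ≤ k → c k s = c N s := by
    intro k hk
    induction k with
    | zero =>
      have hN : N = 0 := by omega
      rw [hN]
    | succ k ih =>
      rcases Nat.lt_or_ge N (k + 1) with h1 | h1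
      · have hk' : N ≤ k := by omega
        have hne : s ≠ sel k := fun he => h k hk' he.symm
        rw [hstep, if_neg hne, ih hk']
      · have h2 : N = k + 1 := by omega
        rw [h2]
  -- pigeonhole: some node t selected infinitely often
  obtain ⟨t, ht⟩ := Finite.exists_infinite_fiber sel
  have hpinf : (setOf (fun j => sel j = t)).Infinite := by
    rw [Set.infinite_coe_iff] at ht
    convert ht using 1
    rfl
  have hfin : ∀ hf : (setOf (fun j => sel j = t)).Finite, True := fun _ => trivial
  -- choose m with f t n > f s (c N s) for all n ≥ m
  obtain ⟨m, hm⟩ := (tendsto_atTop.mp (hub t) (f s (c N s) + 1)).exists_forall_of_atTop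
  set p : ℕ → Prop := fun j => sel j = t with hp
  have hnotfin : ∀ hf : (setOf p).Finite, (max m N) < hf.toFinset.card :=
    fun hf => absurd hf hpinf
  set k := Nat.nth p (max m N) with hk
  have hkmem : p k := Nat.nth_mem_of_infinite hpinf _
  have hkge : max m N ≤ k := Nat.le_nth hnotfin
  have hcount_k : Nat.count p k = max m N := Nat.count_nth hnotfin
  have hckt : c k t = max m N := by rw [hcount, hp] at *; exact hcount_k
  have h1 : f s (c N s) + 1 ≤ f t (c k t) := by
    rw [hckt]; exact hm _ (le_max_left _ _)
  have h2 : f (sel k) (c k (sel k)) ≤ f s (c k s) := hmin k s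
  rw [hkmem, hconst k (le_trans (le_max_right _ _) hkge), hckt] at h2
  linarith [hm (max m N) (le_max_left _ _)]
end

section
/- Let (T_k) be an increasing sequence of finite rooted trees (each obtained from the previous by adding one leaf) generated by a process in which, almost surely, every node is selected for expansion infinitely often, and each expansion of a node s adds a child that equals any fixed designated successor of s with probability at least p(s) > 0, independently across expansions. Then for any fixed finite path s₀, s₁, ..., s_m in the underlying transition system starting at the root, with probability 1 there exists k such that T_k contains the whole path. -/
open MeasureTheory

open scoped Classical

lemma iIndepSet_subfamily {Ω S : Type*} [MeasurableSpace Ω] {μ : Measure Ω}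
    {Exp : S × ℕ → Set Ω} (h : ProbabilityTheory.iIndepSet Exp μ) (s : S) :
    ProbabilityTheory.iIndepSet (fun j => Exp (s, j)) μ := by
  rw [ProbabilityTheory.iIndepSet_iff] at h ⊢
  intro s' f hf
  have hinj : Set.InjOn (fun j => ((s, j) : S × ℕ)) (s' : Set ℕ) := fun a _ b _ hab => congrArg Prod.snd hab
  have := h (s'.image (fun j => (s, j))) (f := fun x => f x.2) ?_
  · rw [Finset.prod_image hinj] at this
    convert this using 2
    ext ω
    simp
  · intro x hx
    simp only [Finset.mem_image] at hx
    obtain ⟨j, hj, rfl⟩ := hx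
    exact hf j hj

/-- Probabilistic completeness along a fixed solution path. The growing trees
are encoded by the monotone family of events `InTree k s` ("state `s` belongs
to the tree `T_k`"); the root `path 0` is always in the tree. Each node `s` is
expanded infinitely often: the independent events `Exp (s, j)` ("the `j`-th
expansion of `s` produces the designated successor") all occur with
probability at least `p s`, and `p (path i) > 0` along the path. Whenever
`path i` is in some tree and one of its expansions hits, `path (i+1)` enters
the tree. Then, with probability 1, some tree `T_k` contains the whole path
`path 0, …, path m`. -/
theorem stmt_13 {Ω S : Type*} [MeasurableSpace Ω] (μ : Measure Ω) [IsProbabilityMeasure μ]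
    (m : ℕ) (path : ℕ → S)
    (InTree : ℕ → S → Set Ω)
    (hTmeas : ∀ k s, MeasurableSet (InTree k s))
    (hTmono : ∀ s, Monotone fun k => InTree k s)
    (hroot : ∀ k, InTree k (path 0) = Set.univ)
    (Exp : S × ℕ → Set Ω)
    (hEmeas : ∀ x, MeasurableSet (Exp x))
    (p : S → ℝ) (hp : ∀ i < m, 0 < p (path i))
    (hPExp : ∀ s j, ENNReal.ofReal (p s) ≤ μ (Exp (s, j)))
    (hindep : ProbabilityTheory.iIndepSet Exp μ)
    (hlink : ∀ i < m, ∀ ω : Ω,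
      (∃ k, ω ∈ InTree k (path i)) → (∃ j, ω ∈ Exp (path i, j)) →
      ∃ k, ω ∈ InTree k (path (i + 1))) :
    μ {ω : Ω | ∃ k, ∀ i ≤ m, ω ∈ InTree k (path i)} = 1 := by
  set A : ℕ → Set Ω := fun i => {ω | ∃ k, ω ∈ InTree k (path i)} with hA
  have hAmeas : ∀ i, MeasurableSet (A i) := by
    intro i
    have : A i = ⋃ k, InTree k (path i) := by ext ω; simp [hA]
    rw [this]; exact MeasurableSet.iUnion fun k => hTmeas k _
  -- each A i has measure 1
  have hA1 : ∀ i ≤ m, μ (A i) = 1 := by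
    intro i hi
    induction i with
    | zero =>
      have : A 0 = Set.univ :=
        Set.eq_univ_iff_forall.mpr fun ω => ⟨0, by simp [hroot 0]⟩
      rw [this]; exact measure_univ
    | succ n ih =>
      have hn : n < m := hi
      have hAn : μ (A n) = 1 := ih (le_of_lt hn)
      -- Borel-Cantelli for expansions of path n
      set s : ℕ → Set Ω := fun j => Exp (path n, j) with hs
      have hsm : ∀ j, MeasurableSet (s j) := fun j => hEmeas _
      have hsum : (∑' j, μ (s j)) = ⊤ := by
        refine top_le_iff.mp ?_
        calc (⊤ : ENNReal) = ∑' _ : ℕ, ENNReal.ofReal (p (path n)) := by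
              rw [ENNReal.tsum_const_eq_top_of_ne_zero]
              simpa using (hp n hn)
          _ ≤ ∑' j, μ (s j) := ENNReal.tsum_le_tsum fun j => hPExp _ j
      have hlims : μ (Filter.limsup s Filter.atTop) = 1 :=
        ProbabilityTheory.measure_limsup_eq_one hsm (iIndepSet_subfamily hindep _) hsum
      have hE1 : μ {ω | ∃ j, ω ∈ Exp (path n, j)} = 1 := by
        refine le_antisymm prob_le_one ?_
        rw [← hlims]
        refine measure_mono fun ω hω => ?_
        rw [Filter.mem_limsup_iff_frequently_mem] at hω
        exact hω.exists
      -- combine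
      have hsub : A n ∩ {ω | ∃ j, ω ∈ Exp (path n, j)} ⊆ A (n + 1) :=
        fun ω ⟨h1, h2⟩ => hlink n hn ω h1 h2
      have hEmeas' : MeasurableSet {ω | ∃ j, ω ∈ Exp (path n, j)} := by
        have : {ω | ∃ j, ω ∈ Exp (path n, j)} = ⋃ j, Exp (path n, j) := by ext ω; simp
        rw [this]; exact MeasurableSet.iUnion fun j => hEmeas _
      have : μ (A n ∩ {ω | ∃ j, ω ∈ Exp (path n, j)}) = 1 := by
        rw [measure_inter_conull ((prob_compl_eq_zero_iff hEmeas').mpr hE1)]; exact hAn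
      exact le_antisymm prob_le_one (this ▸ measure_mono hsub)
  -- finite intersection
  have hiInter : μ (⋂ i ∈ Finset.range (m + 1), A i) = 1 := by
    rw [← prob_compl_eq_zero_iff (Finset.measurableSet_biInter _ fun i _ => hAmeas i)]
    rw [Set.compl_iInter₂]
    refine (measure_biUnion_null_iff (Finset.range (m + 1)).countable_toSet).mpr fun i hi => ?_
    exact (prob_compl_eq_zero_iff (hAmeas i)).mpr
      (hA1 i (Nat.lt_succ_iff.mp (Finset.mem_range.mp hi)))
  refine le_antisymm prob_le_one ?_
  rw [← hiInter]
  refine measure_mono fun ω hω => ?_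
  simp only [Set.mem_iInter, Finset.mem_range] at hω
  choose k hk using fun i (hi : i < m + 1) => hω i hi
  classical
  refine ⟨(Finset.range (m + 1)).sup fun i => if hi : i < m + 1 then k i hi else 0, fun i hi => ?_⟩
  have hi' : i < m + 1 := Nat.lt_succ_of_le hi
  refine hTmono (path i) ?_ (hk i hi')
  calc k i hi' = if hi : i < m + 1 then k i hi else 0 := by simp [hi']
    _ ≤ _ := Finset.le_sup (f := fun i => if hi : i < m + 1 then k i hi else 0) (Finset.mem_range.mpr hi')
end
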